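/- arXiv:2604.27391 — 5 statements merged into one kernel-verified Lean document; each statement's English description precedes it below -/
import Mathlib

section
/- Let G be a group and ρ an absolutely irreducible finite-dimensional representation of G over a finite field F of characteristic p, such that ρ cannot be realized over any proper subfield of F. Then the underlying F_p-vector space of ρ has no G-invariant F_p-subspaces other than 0 and the whole space. -/
/-!
Let `W₀ ⊆ W` be a minimal nonzero `G`-invariant additive subgroup, `A` the ring generated by
`ρ(G)` and `K ⊆ F` the subfield of scalars preserving `W₀`. Irreducibility over `F` makes the
`F`-span of `W₀` everything, so `A` acts faithfully on `W₀`. By Schur's lemma and Wedderburn's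
little theorem `End_A(W₀)` is a finite field, so by Jacobson density every endomorphism of `W₀`
is the action of some `a ∈ A`; faithfulness makes such `a` central in `A`, so the scalar
commutant identifies `End_A(W₀)` with `K`. Density once more realises every `K`-linear
endomorphism of `W₀` by `A`, and applying the `F`-linear realisations of the coordinate
projections shows that a `K`-basis of `W₀` is `F`-linearly independent, hence an `F`-basis of
`V`. In that basis `ρ` has entries in `K`, so `K = F`: then `W₀` is an `F`-subspace, hence `V`.
-/

open Submodule

namespace Submodule

variable {R V : Type*} (F : Type*) [Ring R] [Field F] [AddCommGroup V] [Module R V] [Module F V]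

def scalarStabilizer (N : Submodule R V) : Subring F where
  carrier := {c | ∀ x ∈ N, c • x ∈ N}
  mul_mem' {c d} hc hd x hx := by rw [mul_smul]; exact hc _ (hd x hx)
  one_mem' x hx := by rwa [one_smul]
  add_mem' {c d} hc hd x hx := by rw [add_smul]; exact N.add_mem (hc x hx) (hd x hx)
  zero_mem' x _ := by rw [zero_smul]; exact N.zero_mem
  neg_mem' {c} hc x hx := by rw [neg_smul]; exact N.neg_mem (hc x hx)

variable [Finite F]

def stabilizerField (N : Submodule R V) : Subfield F :=
  (scalarStabilizer F N).toSubfield fun c hc => by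
    obtain rfl | hc0 := eq_or_ne c 0
    · rw [inv_zero]; exact zero_mem _
    obtain ⟨d, hd⟩ := (Finite.isField_of_domain (scalarStabilizer F N)).mul_inv_cancel
      (a := ⟨c, hc⟩) (by simpa using hc0)
    rw [inv_eq_of_mul_eq_one_right congr(Subtype.val $hd)]
    exact d.2

variable {F}

theorem mem_stabilizerField {N : Submodule R V} {c : F} :
    c ∈ stabilizerField F N ↔ ∀ x ∈ N, c • x ∈ N :=
  Iff.rfl

instance (N : Submodule R V) : SMul (stabilizerField F N) N :=
  ⟨fun c x => ⟨(c : F) • (x : V), c.2 x x.2⟩⟩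

@[simp]
theorem coe_stabilizerField_smul {N : Submodule R V} (c : stabilizerField F N) (x : N) :
    ((c • x : N) : V) = (c : F) • (x : V) :=
  rfl

instance (N : Submodule R V) : Module (stabilizerField F N) N :=
  Subtype.coe_injective.module _ N.subtype.toAddMonoidHom fun _ _ => rfl

end Submodule

section Density

variable {R M : Type*} [Ring R] [AddCommGroup M] [Module R M] [Finite M]

theorem exists_smul_eq_of_forall_commute [IsSemisimpleModule R M] (f : M →+ M)
    (hf : ∀ (ψ : Module.End R M) x, f (ψ x) = ψ (f x)) : ∃ r : R, ∀ x, f x = r • x := by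
  have := Fintype.ofFinite M
  obtain ⟨r, hr⟩ := jacobson_density (R := R)
    { toFun := f, map_add' := f.map_add, map_smul' := hf } Finset.univ
  exact ⟨r, fun x => hr x (Finset.mem_univ x)⟩

theorem IsSimpleModule.commute_of_finite [IsSimpleModule R M] (φ ψ : Module.End R M) :
    Commute φ ψ := by
  classical
  have : Finite (Module.End R M) := Finite.of_injective _ DFunLike.coe_injective
  let := littleWedderburn (Module.End R M)
  exact mul_comm φ ψ

theorem exists_smul_eq_of_isSimpleModule [IsSimpleModule R M] (φ : Module.End R M) :
    ∃ r : R, ∀ x, φ x = r • x :=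
  exists_smul_eq_of_forall_commute φ.toAddMonoidHom fun ψ x =>
    LinearMap.congr_fun (IsSimpleModule.commute_of_finite φ ψ).eq x

end Density

namespace Subring

variable {F V : Type*} [Field F] [AddCommGroup V] [Module F V]

def IsIrreducible (A : Subring (Module.End F V)) : Prop :=
  ∀ U : Submodule F V, (∀ a ∈ A, ∀ x ∈ U, a x ∈ U) → U = ⊥ ∨ U = ⊤

def IsAbsolutelyIrreducible (A : Subring (Module.End F V)) : Prop :=
  A.IsIrreducible ∧ ∀ f : Module.End F V, (∀ a ∈ A, Commute f a) → ∃ c : F, f = c • 1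

variable {A : Subring (Module.End F V)} {N : Submodule A V}

theorem IsIrreducible.span_eq_top (hA : A.IsIrreducible) (hN : N ≠ ⊥) :
    span F (N : Set V) = ⊤ := by
  refine (hA _ fun a ha x hx => ?_).resolve_left fun h => hN ?_
  · exact (span_le.mpr fun y hy => subset_span (N.smul_mem ⟨a, ha⟩ hy) :
      span F (N : Set V) ≤ (span F N).comap a) hx
  · exact eq_bot_iff.mpr fun x hx =>
      (Submodule.mem_bot A).mpr <| (Submodule.mem_bot F).mp (h ▸ subset_span hx)

theorem IsIrreducible.eq_zero_of_forall_mem (hA : A.IsIrreducible) (hN : N ≠ ⊥)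
    {f : Module.End F V} (hf : ∀ x ∈ N, f x = 0) : f = 0 :=
  LinearMap.ext_on (hA.span_eq_top hN) hf

theorem IsIrreducible.eq_top_of_stabilizerField_eq_top [Finite F] (hA : A.IsIrreducible)
    (hN : N ≠ ⊥) (hK : stabilizerField F N = ⊤) : N = ⊤ := by
  refine Submodule.eq_top_iff'.mpr fun x => ?_
  have hx : x ∈ span F (N : Set V) := hA.span_eq_top hN ▸ Submodule.mem_top
  induction hx using span_induction with
  | mem y hy => exact hy
  | zero => exact N.zero_mem
  | add y z _ _ hy hz => exact N.add_mem hy hz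
  | smul c y _ hy => exact mem_stabilizerField.mp (hK ▸ Subfield.mem_top c) y hy

variable [Finite F] [Finite V] [IsSimpleModule A N]

theorem IsAbsolutelyIrreducible.exists_eq_smul (hA : A.IsAbsolutelyIrreducible)
    (φ : Module.End A N) : ∃ c : stabilizerField F N, ∀ x, φ x = c • x := by
  obtain ⟨a, ha⟩ := exists_smul_eq_of_isSimpleModule φ
  have hN : N ≠ ⊥ := (isSimpleModule_iff_isAtom.mp ‹_›).1
  have hcentral : ∀ b ∈ A, Commute (a : Module.End F V) b := fun b hb =>
    sub_eq_zero.mp <| hA.1.eq_zero_of_forall_mem hN fun x hx => by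
      have := congr(Subtype.val $(φ.map_smul ⟨b, hb⟩ ⟨x, hx⟩))
      simp only [ha] at this
      exact sub_eq_zero.mpr this
  obtain ⟨c, hc⟩ := hA.2 _ hcentral
  have hφ : ∀ x : N, (φ x : V) = c • (x : V) := fun x => by
    rw [ha x]; exact LinearMap.congr_fun hc x
  exact ⟨⟨c, fun x hx => hφ ⟨x, hx⟩ ▸ (φ ⟨x, hx⟩).2⟩, fun x => Subtype.ext (hφ x)⟩

theorem IsAbsolutelyIrreducible.exists_smul_eq_of_linearMap (hA : A.IsAbsolutelyIrreducible)
    (f : N →ₗ[stabilizerField F N] N) : ∃ a : A, ∀ x, f x = a • x :=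
  exists_smul_eq_of_forall_commute f.toAddMonoidHom fun ψ x => by
    obtain ⟨c, hc⟩ := hA.exists_eq_smul ψ
    simp only [LinearMap.toAddMonoidHom_coe, hc, map_smul]

theorem IsAbsolutelyIrreducible.linearIndependent_coe_basis (hA : A.IsAbsolutelyIrreducible)
    {ι : Type*} [Fintype ι] (b : Module.Basis ι (stabilizerField F N) N) :
    LinearIndependent F fun i => (b i : V) := by
  classical
  refine Fintype.linearIndependent_iff.mpr fun g hg i₀ => ?_
  -- Realise the coordinate projection onto `b i₀` by some `a ∈ A`; being `F`-linear, `a` then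
  -- isolates the coefficient `g i₀` in the relation `hg`.
  obtain ⟨a, ha⟩ := hA.exists_smul_eq_of_linearMap ((b.coord i₀).smulRight (b i₀))
  have hab : ∀ i, (a : Module.End F V) (b i) = if i = i₀ then (b i₀ : V) else 0 := fun i => by
    have := congr(Subtype.val $(ha (b i)))
    rw [LinearMap.smulRight_apply, Module.Basis.coord_apply, Module.Basis.repr_self,
      Finsupp.single_apply, ite_smul, one_smul, zero_smul] at this
    exact this.symm.trans (apply_ite Subtype.val _ _ _)
  have := congr((a : Module.End F V) $hg)
  simp only [map_sum, map_smul, hab, smul_ite, smul_zero, Finset.sum_ite_eq', Finset.mem_univ,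
    if_true, map_zero] at this
  exact (smul_eq_zero.mp this).resolve_right (by simpa using b.ne_zero i₀)

theorem IsAbsolutelyIrreducible.exists_basis_repr_mem (hA : A.IsAbsolutelyIrreducible) :
    ∃ (m : ℕ) (B : Module.Basis (Fin m) F V),
      (∀ i, B i ∈ N) ∧ ∀ x ∈ N, ∀ i, B.repr x i ∈ stabilizerField F N := by
  let b := Module.finBasis (stabilizerField F N) N
  have hsum (x : N) : (x : V) = ∑ i, ((b.repr x i : stabilizerField F N) : F) • (b i : V) := by
    simpa only [Submodule.coe_sum, coe_stabilizerField_smul] using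
      congr(Subtype.val $(b.sum_repr x)).symm
  have hspan : ⊤ ≤ span F (Set.range fun i => (b i : V)) := by
    rw [← hA.1.span_eq_top (isSimpleModule_iff_isAtom.mp ‹_›).1, span_le]
    intro x hx
    rw [SetLike.mem_coe, show x = _ from hsum ⟨x, hx⟩]
    exact sum_mem fun i _ => smul_mem _ _ (subset_span ⟨i, rfl⟩)
  let B := Module.Basis.mk (hA.linearIndependent_coe_basis b) hspan
  refine ⟨_, B, fun i => by simp [B], fun x hx i => ?_⟩
  have := congrFun (B.repr_sum_self fun i => (b.repr ⟨x, hx⟩ i : F)) i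
  simp only [B, Module.Basis.mk_apply, ← hsum] at this
  exact this ▸ SetLike.coe_mem _

end Subring

theorem Module.Basis.exists_conj_apply_eq_repr {F ι : Type*} [Field F] [Fintype ι] [DecidableEq ι]
    (B : Module.Basis ι F (ι → F)) :
    ∃ M : GL ι F, ∀ (X : GL ι F) i j,
      (↑(M⁻¹ * X * M) : Matrix ι ι F) i j = B.repr ((X : Matrix ι ι F).mulVec (B j)) i := by
  let e := Pi.basisFun F ι
  refine ⟨⟨e.toMatrix B, B.toMatrix e, e.toMatrix_mul_toMatrix_flip B,
    B.toMatrix_mul_toMatrix_flip e⟩, fun X i j => ?_⟩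
  have := basis_toMatrix_mul_linearMap_toMatrix_mul_basis_toMatrix B e B e
    (Matrix.toLin' (X : Matrix ι ι F))
  rw [LinearMap.toMatrix_eq_toMatrix', LinearMap.toMatrix'_toLin'] at this
  simp only [Units.val_mul]
  exact congr($this i j).trans (LinearMap.toMatrix_apply ..)

def AddSubgroup.toClosureSubmodule {F V : Type*} [Field F] [AddCommGroup V] [Module F V]
    (W : AddSubgroup V) {S : Set (Module.End F V)} (hW : ∀ s ∈ S, ∀ x ∈ W, s x ∈ W) :
    Submodule (Subring.closure S) V where
  toAddSubmonoid := W.toAddSubmonoid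
  smul_mem' a x hx := by
    obtain ⟨a, ha⟩ := a
    induction ha using Subring.closure_induction generalizing x with
    | mem s hs => exact hW s hs x hx
    | zero => exact W.zero_mem
    | one => exact hx
    | add f g _ _ hf hg => exact W.add_mem (hf x hx) (hg x hx)
    | neg f _ hf => exact W.neg_mem (hf x hx)
    | mul f g _ _ hf hg => exact hf _ (hg x hx)

theorem Subring.isAbsolutelyIrreducible_closure_range_toLin' {F ι G : Type*} [Field F]
    [Fintype ι] [DecidableEq ι] (ρ : G → Matrix ι ι F)
    (hirr : ∀ U : Submodule F (ι → F), (∀ g, ∀ x ∈ U, (ρ g).mulVec x ∈ U) → U = ⊥ ∨ U = ⊤)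
    (hcomm : ∀ f : Matrix ι ι F, (∀ g, f * ρ g = ρ g * f) → ∃ c : F, f = c • 1) :
    (closure (Set.range fun g => Matrix.toLin' (ρ g))).IsAbsolutelyIrreducible := by
  have hρ (g : G) : Matrix.toLin' (ρ g) ∈ closure (Set.range fun g => Matrix.toLin' (ρ g)) :=
    subset_closure ⟨g, rfl⟩
  refine ⟨fun U hU => hirr U fun g => hU _ (hρ g), fun f hf => ?_⟩
  obtain ⟨c, hc⟩ := hcomm (LinearMap.toMatrix' f) fun g => by
    simpa only [LinearMap.toMatrix'_mul, LinearMap.toMatrix'_toLin'] using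
      congr(LinearMap.toMatrix' $((hf _ (hρ g)).eq))
  refine ⟨c, ?_⟩
  rw [← Matrix.toLin'_toMatrix' f, hc, map_smul, Matrix.toLin'_one]
  rfl

theorem stmt0_general {p : ℕ} {F : Type*} [Field F] [Fintype F]
    [Algebra (ZMod p) F]
    {G : Type*} [Group G] {n : ℕ} (ρ : G →* GL (Fin n) F)
    (hirr : ∀ U : Submodule F (Fin n → F),
      (∀ g : G, ∀ x ∈ U, (ρ g : Matrix (Fin n) (Fin n) F).mulVec x ∈ U) → U = ⊥ ∨ U = ⊤)
    (hcomm : ∀ f : Matrix (Fin n) (Fin n) F,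
      (∀ g : G, f * (ρ g : Matrix (Fin n) (Fin n) F) = (ρ g : Matrix (Fin n) (Fin n) F) * f) →
      ∃ c : F, f = c • (1 : Matrix (Fin n) (Fin n) F))
    (hmin : ∀ K : Subfield F, K ≠ ⊤ →
      ¬ ∃ M : GL (Fin n) F, ∀ g : G, ∀ i j,
        ((↑(M⁻¹ * ρ g * M) : Matrix (Fin n) (Fin n) F) i j) ∈ K)
    (W : Submodule (ZMod p) (Fin n → F))
    (hW : ∀ g : G, ∀ x ∈ W, (ρ g : Matrix (Fin n) (Fin n) F).mulVec x ∈ W) :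
    W = ⊥ ∨ W = ⊤ := by
  classical
  let S := Set.range fun g => Matrix.toLin' (ρ g : Matrix (Fin n) (Fin n) F)
  have hρA (g : G) : Matrix.toLin' (ρ g : Matrix (Fin n) (Fin n) F) ∈ Subring.closure S :=
    Subring.subset_closure ⟨g, rfl⟩
  have hA := Subring.isAbsolutelyIrreducible_closure_range_toLin'
    (fun g => (ρ g : Matrix (Fin n) (Fin n) F)) hirr hcomm
  let W' := W.toAddSubgroup.toClosureSubmodule (S := S) fun _ ⟨g, hg⟩ x hx => hg ▸ hW g x hx
  obtain hbot | ⟨N, hN, hNW⟩ := eq_bot_or_exists_atom_le W'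
  · refine Or.inl (Submodule.ext fun x => (SetLike.ext_iff.mp hbot x).trans ?_)
    exact (Submodule.mem_bot _).trans (Submodule.mem_bot _).symm
  have := isSimpleModule_iff_isAtom.mpr hN
  obtain ⟨_, B, hBN, hrepr⟩ := hA.exists_basis_repr_mem (N := N)
  let B' := B.reindex (B.indexEquiv (Pi.basisFun F (Fin n)))
  obtain ⟨M, hM⟩ := B'.exists_conj_apply_eq_repr
  have hK : Submodule.stabilizerField F N = ⊤ := by
    by_contra hK
    refine hmin _ hK ⟨M, fun g i j => hM _ i j ▸ ?_⟩
    simp only [B', Module.Basis.reindex_apply, Module.Basis.repr_reindex_apply]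
    exact hrepr _ (N.smul_mem ⟨_, hρA g⟩ (hBN _)) _
  have hNtop := hA.1.eq_top_of_stabilizerField_eq_top hN.1 hK
  exact Or.inr (eq_top_iff'.mpr fun x => (hNW (hNtop ▸ Submodule.mem_top) : x ∈ W'))

/-- Let `G` be a group and `ρ` an absolutely irreducible finite-dimensional
representation of `G` over a finite field `F` of characteristic `p` (absolute irreducibility is
encoded, as usual over finite fields, by irreducibility together with the commutant consisting of
scalars), such that `ρ` cannot be realized over any proper subfield of `F`.  Then the underlying
`𝔽_p`-vector space of `ρ` has no `G`-invariant `𝔽_p`-subspaces other than `0` and the whole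
space. -/
theorem stmt0 {p : ℕ} [Fact p.Prime] {F : Type*} [Field F] [Fintype F] [CharP F p]
    [Algebra (ZMod p) F]
    {G : Type*} [Group G] {n : ℕ} (ρ : G →* GL (Fin n) F)
    (hirr : ∀ U : Submodule F (Fin n → F),
      (∀ g : G, ∀ x ∈ U, (ρ g : Matrix (Fin n) (Fin n) F).mulVec x ∈ U) → U = ⊥ ∨ U = ⊤)
    (hcomm : ∀ f : Matrix (Fin n) (Fin n) F,
      (∀ g : G, f * (ρ g : Matrix (Fin n) (Fin n) F) = (ρ g : Matrix (Fin n) (Fin n) F) * f) →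
      ∃ c : F, f = c • (1 : Matrix (Fin n) (Fin n) F))
    (hmin : ∀ K : Subfield F, K ≠ ⊤ →
      ¬ ∃ M : GL (Fin n) F, ∀ g : G, ∀ i j,
        ((↑(M⁻¹ * ρ g * M) : Matrix (Fin n) (Fin n) F) i j) ∈ K)
    (W : Submodule (ZMod p) (Fin n → F))
    (hW : ∀ g : G, ∀ x ∈ W, (ρ g : Matrix (Fin n) (Fin n) F).mulVec x ∈ W) :
    W = ⊥ ∨ W = ⊤ :=
  stmt0_general ρ hirr hcomm hmin W hW
end

section
/- Let ρ be an absolutely irreducible representation of a group G over a finite field F of characteristic p, let F' = F^⟨σ₀⟩ be the fixed field of a nontrivial element σ₀ of Gal(F/F_p). If ρ^{σ₀} ≅ ρ (the Galois twist by σ₀ is isomorphic to ρ), then ρ can be realized over F'. -/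
/-!
If `ρ^σ = M⁻¹ ρ M`, the twisted norm `P = M · M^σ ⋯ M^(σ^(m-1))` (`m` the order of `σ`) commutes
with `ρ`, hence is a scalar `c`, and `M P^σ = P M` forces `σ c = c`. Over a finite field every
`σ`-fixed unit is a norm `l · σ l ⋯ σ^(m-1) l` (Hilbert 90 and counting), so rescaling `M` by such
an `l` gives `P = 1`. Then `v ↦ M σ(v)` is a `σ`-semilinear map of order `m`; by Dedekind's
independence of `1, σ, …, σ^(m-1)` its fixed vectors span `Fⁿ`. The matrix `A` of a basis of fixed
vectors satisfies `M A^σ = A`, and then `A⁻¹ ρ A` has `σ`-fixed entries.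
-/

open Finset Function

@[to_additive]
theorem Finset.prod_range_succ_eq_of_eq {M : Type*} [CancelCommMonoid M] {f : ℕ → M} {m : ℕ}
    (h : f m = f 0) : ∏ i ∈ range m, f (i + 1) = ∏ i ∈ range m, f i :=
  mul_right_cancel (b := f 0) <| by rw [← prod_range_succ', prod_range_succ, h]

theorem MonoidHom.range_eq_ker_of_ker_le_range {G : Type*} [Group G] [Finite G] {f g : G →* G}
    (hfg : f.range ≤ g.ker) (hgf : f.ker ≤ g.range) : f.range = g.ker := by
  refine Subgroup.eq_of_le_of_card_ge hfg
    (Nat.le_of_mul_le_mul_right ?_ (Nat.card_pos (α := g.range)))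
  calc Nat.card g.ker * Nat.card g.range = Nat.card f.ker * Nat.card f.range := by
        rw [← Subgroup.index_ker, ← Subgroup.index_ker, Subgroup.card_mul_index,
          Subgroup.card_mul_index]
    _ ≤ Nat.card f.range * Nat.card g.range := by
        rw [mul_comm]; exact Nat.mul_le_mul_left _ (Subgroup.card_le_of_le hgf)

theorem RingEquiv.pow_succ_apply {R : Type*} [Mul R] [Add R] (σ : R ≃+* R) (i : ℕ) (x : R) :
    (σ ^ (i + 1)) x = σ ((σ ^ i) x) := by
  rw [pow_succ']; rfl

section

variable {F : Type*} [Field F] {σ : F ≃+* F}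

theorem eq_zero_of_forall_sum_mul_pow_apply_eq_zero {a : ℕ → F}
    (h : ∀ x, ∑ i ∈ range (orderOf σ), a i * (σ ^ i) x = 0) {i : ℕ} (hi : i < orderOf σ) :
    a i = 0 := by
  have hinj : Injective fun j : Fin (orderOf σ) => ((σ ^ (j : ℕ) : F ≃+* F) : F →* F) :=
    fun j k hjk => Fin.ext <| pow_injOn_Iio_orderOf j.2 k.2 <|
      RingEquiv.ext fun x => DFunLike.congr_fun hjk x
  refine Fintype.linearIndependent_iff.1 ((linearIndependent_monoidHom F F).comp _ hinj)
    (fun j => a j) (funext fun x => ?_) ⟨i, hi⟩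
  have hx := h x
  rw [← Fin.sum_univ_eq_sum_range (fun j => a j * (σ ^ j) x)] at hx
  simpa [Finset.sum_apply] using hx

theorem LinearMap.span_fixedPoints_eq_top (hσ : IsOfFinOrder σ) {V : Type*} [AddCommGroup V]
    [Module F V] (φ : V →ₛₗ[(σ : F →+* F)] V) (hφ : ∀ v, φ^[orderOf σ] v = v) :
    Submodule.span F (fixedPoints φ) = ⊤ := by
  set m := orderOf σ
  refine Submodule.eq_top_iff'.2 fun v => by_contra fun hv => ?_
  obtain ⟨f, hfv, hf⟩ := Submodule.exists_dual_map_eq_bot_of_notMem hv inferInstance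
  -- `f` kills every trace `∑ σⁱ θ • φⁱ v`, contradicting Dedekind independence at `i = 0`
  have htrace (θ : F) : ∑ i ∈ Finset.range m, (σ ^ i) θ • φ^[i] v ∈ fixedPoints φ := by
    have hper : (σ ^ m) θ • φ^[m] v = (σ ^ 0) θ • φ^[0] v := by
      rw [pow_orderOf_eq_one, hφ]; rfl
    rw [mem_fixedPoints, IsFixedPt, map_sum,
      ← sum_range_succ_eq_of_eq (f := fun i => (σ ^ i) θ • φ^[i] v) hper]
    refine sum_congr rfl fun i _ => ?_
    rw [map_smulₛₗ, iterate_succ_apply', RingEquiv.pow_succ_apply]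
    rfl
  have hf0 (θ : F) : ∑ i ∈ Finset.range m, f (φ^[i] v) * (σ ^ i) θ = 0 := by
    have := Submodule.mem_map_of_mem (f := f) (Submodule.subset_span (htrace θ))
    simpa [hf, mul_comm] using this
  exact hfv (eq_zero_of_forall_sum_mul_pow_apply_eq_zero hf0 hσ.orderOf_pos)

theorem exists_ne_zero_mul_apply_eq (hσ : IsOfFinOrder σ) {l : F}
    (hl : ∏ i ∈ range (orderOf σ), (σ ^ i) l = 1) : ∃ a ≠ 0, l * σ a = a := by
  let φ : F →ₛₗ[(σ : F →+* F)] F := l • (σ : F →+* F).toSemilinearMap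
  have hφ (k : ℕ) (x : F) : φ^[k] x = (∏ i ∈ range k, (σ ^ i) l) * (σ ^ k) x := by
    induction k generalizing x with
    | zero => simp
    | succ k ih =>
      rw [iterate_succ_apply, ih, prod_range_succ, mul_assoc]
      change _ * (σ ^ k) (l * σ x) = _
      rw [map_mul, pow_succ]
      rfl
  have hspan := LinearMap.span_fixedPoints_eq_top hσ φ fun x => by
    rw [hφ, hl, pow_orderOf_eq_one]; simp
  by_contra! h
  refine top_ne_bot (hspan.symm.trans (Submodule.span_eq_bot.2 fun a ha => ?_))
  by_contra ha0
  exact h a ha0 ha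

instance RingEquiv.instFinite {R S : Type*} [Mul R] [Add R] [Mul S] [Add S] [Finite R]
    [Finite S] : Finite (R ≃+* S) :=
  .of_injective _ DFunLike.coe_injective

theorem exists_prod_pow_apply_eq [Finite F] (σ : F ≃+* F) {c : F} (hc : c ≠ 0) (hσc : σ c = c) :
    ∃ l, ∏ i ∈ range (orderOf σ), (σ ^ i) l = c := by
  set m := orderOf σ
  let τ (i : ℕ) : Fˣ →* Fˣ := Units.map (σ ^ i : F ≃+* F).toMonoidHom
  have hτ (i : ℕ) (u : Fˣ) : τ 1 (τ i u) = τ (i + 1) u :=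
    Units.ext (RingEquiv.pow_succ_apply σ i u).symm
  let norm : Fˣ →* Fˣ := ∏ i ∈ range m, τ i
  let δ : Fˣ →* Fˣ := MonoidHom.id Fˣ / τ 1
  have hnorm (u : Fˣ) : (norm u : F) = ∏ i ∈ range m, (σ ^ i) u := by
    simp [norm, τ, MonoidHom.finsetProd_apply]
  have hδ (u : Fˣ) : u ∈ δ.ker ↔ τ 1 u = u := by
    rw [MonoidHom.mem_ker, MonoidHom.div_apply, div_eq_one, eq_comm]; rfl
  have hrange : norm.range ≤ δ.ker := by
    rintro _ ⟨u, rfl⟩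
    have hper : τ m u = τ 0 u := by ext; simp [τ, pow_orderOf_eq_one, m]
    rw [hδ, MonoidHom.finsetProd_apply, map_prod]
    simp only [hτ]
    exact prod_range_succ_eq_of_eq (f := fun i => τ i u) hper
  have hker : norm.ker ≤ δ.range := by
    intro u hu
    obtain ⟨a, ha0, ha⟩ := exists_ne_zero_mul_apply_eq (isOfFinOrder_of_finite σ) (l := u)
      (by rw [← hnorm, (MonoidHom.mem_ker).1 hu, Units.val_one])
    refine ⟨Units.mk0 a ha0, Units.ext ?_⟩
    rw [MonoidHom.div_apply, Units.val_div_eq_div_val]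
    change a / (σ ^ 1) a = u
    rw [pow_one, div_eq_iff ((map_ne_zero σ).2 ha0), ha]
  obtain ⟨u, hu⟩ := (MonoidHom.range_eq_ker_of_ker_le_range hrange hker).ge
    ((hδ (Units.mk0 c hc)).2 (Units.ext hσc))
  exact ⟨u, by rw [← hnorm, hu, Units.val_mk0]⟩

namespace Matrix

section Map

variable {m n : Type*} (M : Matrix m n F)

theorem map_map_pow (k : ℕ) : (M.map σ).map ⇑(σ ^ k) = M.map ⇑(σ ^ (k + 1)) := by
  rw [map_map, pow_succ]; rfl

theorem map_pow_map (k : ℕ) : (M.map ⇑(σ ^ k)).map σ = M.map ⇑(σ ^ (k + 1)) := by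
  rw [map_map, pow_succ']; rfl

theorem map_pow_orderOf : M.map ⇑(σ ^ orderOf σ) = M := by
  rw [pow_orderOf_eq_one]; rfl

end Map

variable {n : Type*} [Fintype n] [DecidableEq n]

def twistedNorm (σ : F ≃+* F) (M : Matrix n n F) (k : ℕ) : Matrix n n F :=
  ((List.range k).map fun i => M.map ⇑(σ ^ i)).prod

variable {M : Matrix n n F} {k : ℕ}

@[simp]
theorem twistedNorm_zero : twistedNorm σ M 0 = 1 := rfl

theorem twistedNorm_succ : twistedNorm σ M (k + 1) = twistedNorm σ M k * M.map ⇑(σ ^ k) :=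
  List.prod_range_succ _ k

theorem twistedNorm_succ' : twistedNorm σ M (k + 1) = M * (twistedNorm σ M k).map σ := by
  induction k with
  | zero => simp [twistedNorm_succ]
  | succ k ih =>
    calc twistedNorm σ M (k + 2) = twistedNorm σ M (k + 1) * M.map ⇑(σ ^ (k + 1)) :=
          twistedNorm_succ
      _ = M * ((twistedNorm σ M k).map σ * M.map ⇑(σ ^ (k + 1))) := by rw [ih, Matrix.mul_assoc]
      _ = M * (twistedNorm σ M (k + 1)).map σ := by
          rw [twistedNorm_succ, Matrix.map_mul, map_pow_map]

theorem mul_twistedNorm {R : Matrix n n F} (h : R * M = M * R.map σ) :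
    R * twistedNorm σ M k = twistedNorm σ M k * R.map ⇑(σ ^ k) := by
  induction k with
  | zero => simp
  | succ k ih =>
    rw [twistedNorm_succ, ← Matrix.mul_assoc, ih, Matrix.mul_assoc, ← Matrix.map_mul, h,
      Matrix.map_mul, map_map_pow, Matrix.mul_assoc]

theorem twistedNorm_smul (l : F) :
    twistedNorm σ (l • M) k = (∏ i ∈ range k, (σ ^ i) l) • twistedNorm σ M k := by
  induction k with
  | zero => simp
  | succ k ih =>
    rw [twistedNorm_succ, ih, map_smul' _ _ _ (map_mul _), twistedNorm_succ,
      prod_range_succ, smul_mul_smul_comm]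

theorem isUnit_twistedNorm (hM : IsUnit M) : IsUnit (twistedNorm σ M k) :=
  List.prod_isUnit fun _ h => by
    obtain ⟨i, -, rfl⟩ := List.mem_map.1 h
    exact hM.map ((σ ^ i : F ≃+* F) : F →+* F).mapMatrix

variable (σ M) in
def twistedMulVec : (n → F) →ₛₗ[(σ : F →+* F)] (n → F) where
  toFun v := M *ᵥ (σ ∘ v)
  map_add' v w := by rw [← mulVec_add]; congr 1; ext; simp
  map_smul' c v := by rw [← mulVec_smul]; congr 1; ext; simp

theorem iterate_twistedMulVec (v : n → F) :
    (twistedMulVec σ M)^[k] v = twistedNorm σ M k *ᵥ (⇑(σ ^ k) ∘ v) := by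
  induction k with
  | zero => simp
  | succ k ih =>
    rw [iterate_succ_apply', ih]
    change M *ᵥ (σ ∘ _) = _
    have hσ : ⇑σ ∘ (twistedNorm σ M k *ᵥ ⇑(σ ^ k) ∘ v)
        = (twistedNorm σ M k).map σ *ᵥ ⇑(σ ^ (k + 1)) ∘ v := by
      funext i
      rw [pow_succ']
      exact RingHom.map_mulVec (σ : F →+* F) _ _ i
    rw [hσ, mulVec_mulVec, twistedNorm_succ']

theorem exists_isUnit_mul_map_eq (hσ : IsOfFinOrder σ) (hM : twistedNorm σ M (orderOf σ) = 1) :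
    ∃ A : Matrix n n F, IsUnit A ∧ M * A.map σ = A := by
  set φ := twistedMulVec σ M
  have hspan := LinearMap.span_fixedPoints_eq_top hσ φ fun v => by
    rw [iterate_twistedMulVec, hM, one_mulVec, pow_orderOf_eq_one]
    rfl
  obtain ⟨s, hsφ, hs, hli⟩ := exists_linearIndependent F (fixedPoints φ)
  let b₀ := Module.Basis.mk hli (by rw [Subtype.range_coe, hs, hspan])
  let b := b₀.reindex (b₀.indexEquiv (Pi.basisFun F n))
  have hb (j : n) : φ (b j) = b j := hsφ (by simp [b, b₀])
  have := (Pi.basisFun F n).invertibleToMatrix b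
  refine ⟨(Pi.basisFun F n).toMatrix b, isUnit_of_invertible _, ?_⟩
  ext i j
  rw [Module.Basis.toMatrix_apply, Pi.basisFun_repr, ← hb j]
  rfl

theorem apply_eq_of_twistedNorm_eq_smul_one [Nonempty n] (hM : IsUnit M) {c : F}
    (h : twistedNorm σ M (orderOf σ) = c • 1) : σ c = c := by
  have key : M * (twistedNorm σ M (orderOf σ)).map σ = twistedNorm σ M (orderOf σ) * M := by
    rw [← twistedNorm_succ', twistedNorm_succ, map_pow_orderOf]
  rw [h, map_smul' _ _ _ (map_mul σ), Matrix.map_one _ (map_zero σ) (map_one σ), mul_smul_comm,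
    smul_mul_assoc, Matrix.mul_one, Matrix.one_mul] at key
  exact smul_left_injective F hM.ne_zero key

theorem exists_twistedNorm_smul_eq_one [Finite F] [Nonempty n] (hM : IsUnit M) {c : F}
    (h : twistedNorm σ M (orderOf σ) = c • 1) :
    ∃ l : F, twistedNorm σ (l • M) (orderOf σ) = 1 := by
  have hc : c ≠ 0 := by
    rintro rfl
    rw [zero_smul] at h
    exact not_isUnit_zero (h ▸ isUnit_twistedNorm hM)
  obtain ⟨l, hl⟩ := exists_prod_pow_apply_eq σ (inv_ne_zero hc)
    (by rw [map_inv₀, apply_eq_of_twistedNorm_eq_smul_one hM h])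
  exact ⟨l, by rw [twistedNorm_smul, hl, h, smul_smul, inv_mul_cancel₀ hc, one_smul]⟩

theorem map_eq_self_of_mul_eq_mul {X A B R : Matrix n n F} (hA : IsUnit A)
    (hXA : X * A.map σ = A) (hRX : R * X = X * R.map σ) (hAB : A * B = R * A) : B.map σ = B := by
  refine hA.mul_left_cancel ?_
  calc A * B.map σ = X * (A * B).map σ := by rw [Matrix.map_mul, ← Matrix.mul_assoc, hXA]
    _ = R * A := by rw [hAB, Matrix.map_mul, ← Matrix.mul_assoc, ← hRX, Matrix.mul_assoc, hXA]
    _ = A * B := hAB.symm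

end Matrix

end

open Matrix

theorem stmt1_general {F : Type*} [Field F] [Fintype F]
    {G : Type*} [Group G] {n : ℕ} (ρ : G →* GL (Fin n) F)
    (hcomm : ∀ f : Matrix (Fin n) (Fin n) F,
      (∀ g : G, f * (ρ g : Matrix (Fin n) (Fin n) F) = (ρ g : Matrix (Fin n) (Fin n) F) * f) →
      ∃ c : F, f = c • (1 : Matrix (Fin n) (Fin n) F))
    (σ₀ : F ≃+* F)
    (htwist : ∃ M : GL (Fin n) F, ∀ g : G,
      (↑(M⁻¹ * ρ g * M) : Matrix (Fin n) (Fin n) F)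
        = (ρ g : Matrix (Fin n) (Fin n) F).map σ₀) :
    ∃ N : GL (Fin n) F, ∀ g : G, ∀ i j,
      σ₀ ((↑(N⁻¹ * ρ g * N) : Matrix (Fin n) (Fin n) F) i j)
        = (↑(N⁻¹ * ρ g * N) : Matrix (Fin n) (Fin n) F) i j := by
  obtain ⟨M, hM⟩ := htwist
  rcases isEmpty_or_nonempty (Fin n) with _ | _
  · exact ⟨1, fun _ i => isEmptyElim i⟩
  have hρM (g : G) : (ρ g : Matrix (Fin n) (Fin n) F) * (M : Matrix (Fin n) (Fin n) F)
      = M * (ρ g : Matrix (Fin n) (Fin n) F).map σ₀ := by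
    rw [← hM g, ← Units.val_mul, ← Units.val_mul]
    group
  obtain ⟨c, hc⟩ := hcomm _ fun g => by rw [mul_twistedNorm (hρM g), map_pow_orderOf]
  obtain ⟨l, hl⟩ := exists_twistedNorm_smul_eq_one M.isUnit hc
  obtain ⟨_, ⟨N, rfl⟩, hlMN⟩ := exists_isUnit_mul_map_eq (isOfFinOrder_of_finite σ₀) hl
  refine ⟨N, fun g => ?_⟩
  have hconj : (↑(N⁻¹ * ρ g * N) : Matrix (Fin n) (Fin n) F).map σ₀ = ↑(N⁻¹ * ρ g * N) :=
    map_eq_self_of_mul_eq_mul N.isUnit hlMN (by rw [mul_smul_comm, hρM g, smul_mul_assoc])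
      (by rw [← Units.val_mul, ← Units.val_mul]; group)
  exact fun i j => congrFun (congrFun hconj i) j

/-- Let `ρ` be an absolutely irreducible representation of a group `G` over a
finite field `F` of characteristic `p` (absolute irreducibility encoded by irreducibility plus
scalar commutant), and let `F' = F^⟨σ₀⟩` be the fixed field of a nontrivial element `σ₀` of
`Gal(F/𝔽_p)` (for a finite field every ring automorphism is `𝔽_p`-linear).  If the Galois twist
`ρ^{σ₀}` is isomorphic to `ρ`, i.e. some `M ∈ GL_n(F)` conjugates `ρ` to its entrywise `σ₀`-twist,
then `ρ` can be realized over `F'`: it is conjugate to a representation all of whose matrix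
entries are fixed by `σ₀`. -/
theorem stmt1 {p : ℕ} [Fact p.Prime] {F : Type*} [Field F] [Fintype F] [CharP F p]
    {G : Type*} [Group G] {n : ℕ} (ρ : G →* GL (Fin n) F)
    (hirr : ∀ U : Submodule F (Fin n → F),
      (∀ g : G, ∀ x ∈ U, (ρ g : Matrix (Fin n) (Fin n) F).mulVec x ∈ U) → U = ⊥ ∨ U = ⊤)
    (hcomm : ∀ f : Matrix (Fin n) (Fin n) F,
      (∀ g : G, f * (ρ g : Matrix (Fin n) (Fin n) F) = (ρ g : Matrix (Fin n) (Fin n) F) * f) →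
      ∃ c : F, f = c • (1 : Matrix (Fin n) (Fin n) F))
    (σ₀ : F ≃+* F) (hσ₀ : σ₀ ≠ RingEquiv.refl F)
    (htwist : ∃ M : GL (Fin n) F, ∀ g : G,
      (↑(M⁻¹ * ρ g * M) : Matrix (Fin n) (Fin n) F)
        = (ρ g : Matrix (Fin n) (Fin n) F).map σ₀) :
    ∃ N : GL (Fin n) F, ∀ g : G, ∀ i j,
      σ₀ ((↑(N⁻¹ * ρ g * N) : Matrix (Fin n) (Fin n) F) i j)
        = (↑(N⁻¹ * ρ g * N) : Matrix (Fin n) (Fin n) F) i j :=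
  stmt1_general ρ hcomm σ₀ htwist
end

section
/- Let E/F be a quadratic extension of finite fields with involution x ↦ x̄. For n > 2, given any element ξ ∈ E with ξ̄ = -ξ (purely imaginary), there exist vectors (α_2,…,α_n) and (β_2,…,β_n) in E^{n-1} each of Hermitian norm 1 (∑ α_i ᾱ_i = ∑ β_i β̄_i = 1) such that ∑_i (ᾱ_i β_i − α_i β̄_i) = ξ. -/
/-!
Put `η = ξ / 2`, so that `η^q = -η`. The element `1 + η²` is fixed by `x ↦ x^q`, hence lies
in `𝔽_q`, and the norm `x ↦ x^(q+1)` of `𝔽_{q²}/𝔽_q` is surjective (the unit group is cyclic),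
so `x^(q+1) = 1 + η²` for some `x`.
Then `α = e₁` and `β = η e₁ + x e₂` work: `N(β) = -η² + x^(q+1) = 1` and
`ᾱ₁β₁ - α₁β̄₁ = η - η^q = 2η = ξ`.
-/

theorem IsCyclic.exists_pow_eq_of_pow_eq_one {G : Type*} [CommGroup G] [IsCyclic G] [Finite G]
    {a b : ℕ} (hcard : Nat.card G = a * b) {g : G} (hg : g ^ b = 1) : ∃ h : G, h ^ a = g := by
  have ha : a ≠ 0 := by
    rintro rfl
    exact Nat.card_pos.ne' (hcard.trans (zero_mul b))
  have hle : (powMonoidHom a : G →* G).range ≤ (powMonoidHom b).ker := by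
    rintro _ ⟨h, rfl⟩
    simp only [MonoidHom.mem_ker, powMonoidHom_apply, ← pow_mul, ← hcard, pow_card_eq_one']
  have hcard_le :
      Nat.card (powMonoidHom b : G →* G).ker ≤ Nat.card (powMonoidHom a : G →* G).range := by
    rw [IsCyclic.card_powMonoidHom_ker, IsCyclic.card_powMonoidHom_range, hcard,
      Nat.gcd_mul_left_left, Nat.gcd_eq_right (dvd_mul_right a b), Nat.mul_div_cancel_left b
      (Nat.pos_of_ne_zero ha)]
  have hg_mem : g ∈ (powMonoidHom b : G →* G).ker := hg
  rw [← Subgroup.eq_of_le_of_card_ge hle hcard_le] at hg_mem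
  exact hg_mem

namespace FiniteField

variable {E : Type*} [Field E] [Fintype E]

theorem exists_ringHom_eq_pow {q m : ℕ} (hm : m ≠ 0) (hcard : Fintype.card E = q ^ m) :
    ∃ φ : E →+* E, ∀ x, φ x = x ^ q := by
  obtain ⟨n, hp, hcard'⟩ := FiniteField.card E (ringChar E)
  have hq : q ∣ ringChar E ^ (n : ℕ) := hcard' ▸ hcard ▸ dvd_pow_self q hm
  obtain ⟨k, -, rfl⟩ := (Nat.dvd_prime_pow hp).1 hq
  have : ExpChar E (ringChar E) := ExpChar.prime hp
  exact ⟨iterateFrobenius E (ringChar E) k, iterateFrobenius_def (ringChar E) k⟩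

theorem exists_pow_succ_eq_of_pow_eq_self {q : ℕ} (hcard : Fintype.card E = q ^ 2) {c : E}
    (hc : c ^ q = c) : ∃ x : E, x ^ (q + 1) = c := by
  rcases eq_or_ne c 0 with rfl | hc0
  · exact ⟨0, zero_pow q.succ_ne_zero⟩
  have hq : q ≠ 0 := by
    rintro rfl
    exact Fintype.card_ne_zero (hcard.trans (zero_pow two_ne_zero))
  have hunits : Nat.card Eˣ = (q + 1) * (q - 1) := by
    rw [Nat.card_units, Nat.card_eq_fintype_card, hcard, ← Nat.sq_sub_sq, one_pow]
  have hu : Units.mk0 c hc0 ^ (q - 1) = 1 := by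
    ext
    refine mul_right_cancel₀ hc0 ?_
    rw [Units.val_pow_eq_pow_val, Units.val_mk0, ← pow_succ, Nat.sub_add_cancel
      (Nat.one_le_iff_ne_zero.2 hq), hc, Units.val_one, one_mul]
  obtain ⟨x, hx⟩ := IsCyclic.exists_pow_eq_of_pow_eq_one hunits hu
  exact ⟨x, by rw [← Units.val_pow_eq_pow_val, hx, Units.val_mk0]⟩

end FiniteField

theorem exists_hermitian_unit_vectors {E : Type*} [CommRing E] {q : ℕ} (hq : q ≠ 0) (m : ℕ)
    {η x : E} (hη : η ^ q = -η) (hx : x ^ (q + 1) = 1 + η ^ 2) :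
    ∃ α β : Fin (m + 2) → E,
      (∑ i, α i * (α i) ^ q = 1) ∧
      (∑ i, β i * (β i) ^ q = 1) ∧
      (∑ i, ((α i) ^ q * β i - α i * (β i) ^ q) = 2 * η) := by
  refine ⟨Fin.cons 1 0, Fin.cons η (Fin.cons x 0), ?_, ?_, ?_⟩ <;>
    simp only [Fin.sum_univ_succ, Fin.cons_zero, Fin.cons_succ, Pi.zero_apply, zero_pow hq,
      one_pow, one_mul, hη, mul_zero, zero_mul, sub_zero, Finset.sum_const_zero, add_zero]
  · rw [← pow_succ', hx]
    ring
  · ring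

/-- Let `E = 𝔽_{q²}` with `q` odd, with involution the Frobenius `x ↦ x^q`
(so `F = 𝔽_q` is the fixed field).  For `n > 2`, given any purely imaginary `ξ ∈ E`
(i.e. `ξ^q = -ξ`), there exist vectors `(α_2, …, α_n)` and `(β_2, …, β_n)` in `E^{n-1}`, each of
Hermitian norm `1`, such that `∑ᵢ (ᾱᵢ βᵢ − αᵢ β̄ᵢ) = ξ`. -/
theorem stmt6 {E : Type*} [Field E] [Fintype E] (q : ℕ) (hq : Odd q)
    (hcard : Fintype.card E = q ^ 2)
    (n : ℕ) (hn : 2 < n) (ξ : E) (hξ : ξ ^ q = -ξ) :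
    ∃ α β : Fin (n - 1) → E,
      (∑ i, α i * (α i) ^ q = 1) ∧
      (∑ i, β i * (β i) ^ q = 1) ∧
      (∑ i, ((α i) ^ q * β i - α i * (β i) ^ q) = ξ) := by
  have h2 : (2 : E) ≠ 0 := Ring.two_ne_zero fun h ↦ by
    have := FiniteField.even_card_iff_char_two.1 h
    rw [hcard, Nat.odd_iff.1 hq.pow] at this
    exact one_ne_zero this
  obtain ⟨φ, hφ⟩ := FiniteField.exists_ringHom_eq_pow two_ne_zero hcard
  have hη : (ξ / 2) ^ q = -(ξ / 2) := by
    rw [← hφ, map_div₀, map_ofNat, hφ, hξ, neg_div]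
  obtain ⟨x, hx⟩ := FiniteField.exists_pow_succ_eq_of_pow_eq_self hcard
    (c := 1 + (ξ / 2) ^ 2) (by rw [← hφ, map_add, map_one, map_pow, hφ, hη, neg_sq])
  obtain ⟨m, hm⟩ : ∃ m, n - 1 = m + 2 := ⟨n - 3, by omega⟩
  rw [hm, ← mul_div_cancel₀ ξ h2]
  exact exists_hermitian_unit_vectors hq.pos.ne' m hη hx
end

section
/- Let G be a group of invertible linear transformations of a vector space V over a field of odd characteristic p, preserving a direct sum decomposition V = V_1 ⊕ … ⊕ V_k setwise (permuting the summands). Then any transvection in G acts trivially on the set {V_1,…,V_k}. -/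
/-!
A transvection satisfies `(T - 1)² = 0`, i.e. `T² v + v = 2 T v`; in odd characteristic this
puts `T v` in the span of `v` and `T² v`, so `T W ≤ W ⊔ T (T W)` for every subspace `W`.
If `T` moved `Vᵢ` to `Vⱼ ≠ Vᵢ` and `Vⱼ` to `Vₗ`, then `Vⱼ ≤ Vᵢ ⊔ Vₗ`, which independence
forbids unless `Vᵢ = Vⱼ = 0`.
-/

open Function

theorem iSupIndep.eq_bot_of_le_sup {α ι : Type*} [CompleteLattice α] {t : ι → α}
    (ht : iSupIndep t) {i j l : ι} (hij : i ≠ j) (hlj : l ≠ j) (h : t j ≤ t i ⊔ t l) :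
    t j = ⊥ :=
  (ht j).eq_bot_of_le <| h.trans <|
    sup_le (le_iSup₂ (f := fun k _ => t k) i hij) (le_iSup₂ (f := fun k _ => t k) l hlj)

theorem transvection_apply_apply_add {R V : Type*} [CommRing R] [AddCommGroup V] [Module R V]
    {u : V} {ξ : V →ₗ[R] R} (hξu : ξ u = 0) {T : V → V} (hT : ∀ x, T x = x + ξ x • u)
    (v : V) : T (T v) + v = (2 : R) • T v := by
  rw [hT (T v), hT v]
  simp only [map_add, map_smul, hξu, smul_eq_mul, mul_zero, add_zero]
  module

namespace Submodule

variable {K V : Type*} [DivisionRing K] [AddCommGroup V] [Module K V]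
  {T : V →ₗ[K] V}

theorem map_le_sup_map_map (h2 : (2 : K) ≠ 0) (hT : ∀ v, T (T v) + v = (2 : K) • T v)
    (W : Submodule K V) : W.map T ≤ W ⊔ (W.map T).map T := by
  rintro _ ⟨v, hv, rfl⟩
  have hmid : T v = (2 : K)⁻¹ • (T (T v) + v) := by rw [hT, inv_smul_smul₀ h2]
  rw [hmid]
  exact smul_mem _ _ <|
    add_mem (mem_sup_right (mem_map_of_mem (mem_map_of_mem hv))) (mem_sup_left hv)

theorem map_eq_self_of_iSupIndep {ι : Type*} (h2 : (2 : K) ≠ 0) (hTinj : Injective T)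
    (hT : ∀ v, T (T v) + v = (2 : K) • T v) {Vs : ι → Submodule K V} (hind : iSupIndep Vs)
    (hperm : ∀ i, ∃ j, (Vs i).map T = Vs j) (i : ι) : (Vs i).map T = Vs i := by
  obtain ⟨j, hj⟩ := hperm i
  obtain ⟨l, hl⟩ := hperm j
  rw [hj]
  by_cases hij : i = j
  · rw [hij]
  by_cases hlj : l = j
  · subst hlj
    exact map_injective_of_injective hTinj (hl.trans hj.symm)
  have hjbot : Vs j = ⊥ :=
    hind.eq_bot_of_le_sup hij hlj (by simpa only [hj, hl] using map_le_sup_map_map h2 hT (Vs i))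
  have hibot : Vs i = ⊥ := map_injective_of_injective hTinj (by rw [hj, hjbot, map_bot])
  rw [hjbot, hibot]

end Submodule

theorem stmt10_general {p : ℕ} (hp : Odd p) {F V : Type*} [Field F] [CharP F p]
    [AddCommGroup V] [Module F V] {k : ℕ} (Vs : Fin k → Submodule F V)
    (hind : iSupIndep Vs)
    (u : V) (ξ : V →ₗ[F] F) (hξu : ξ u = 0)
    (T : V ≃ₗ[F] V) (hT : ∀ x : V, T x = x + ξ x • u)
    (hperm : ∀ i : Fin k, ∃ j : Fin k, (Vs i).map (T : V →ₗ[F] V) = Vs j) :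
    ∀ i : Fin k, (Vs i).map (T : V →ₗ[F] V) = Vs i := by
  have h2 : (2 : F) ≠ 0 := Ring.two_ne_zero <| by
    rw [ringChar.eq F p]
    rintro rfl
    exact Nat.not_odd_iff_even.2 even_two hp
  exact Submodule.map_eq_self_of_iSupIndep h2 T.injective
    (transvection_apply_apply_add hξu hT) hind hperm

/-- Let `G` be a group of invertible linear transformations of a vector space
`V` over a field of odd characteristic `p`, preserving a direct sum decomposition
`V = V_1 ⊕ ⋯ ⊕ V_k` setwise (permuting the summands).  Then any transvection in `G`
(a map `T(x) = x + ξ(x) u` with `u ≠ 0`, `ξ ≠ 0`, `ξ(u) = 0`) acts trivially on the set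
`{V_1, …, V_k}`, i.e. `T(Vᵢ) = Vᵢ` for all `i`. -/
theorem stmt10 {p : ℕ} [Fact p.Prime] (hp : Odd p) {F V : Type*} [Field F] [CharP F p]
    [AddCommGroup V] [Module F V] {k : ℕ} (Vs : Fin k → Submodule F V)
    (hind : iSupIndep Vs) (hsup : ⨆ i, Vs i = ⊤)
    (u : V) (hu : u ≠ 0) (ξ : V →ₗ[F] F) (hξ : ξ ≠ 0) (hξu : ξ u = 0)
    (T : V ≃ₗ[F] V) (hT : ∀ x : V, T x = x + ξ x • u)
    (hperm : ∀ i : Fin k, ∃ j : Fin k, (Vs i).map (T : V →ₗ[F] V) = Vs j) :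
    ∀ i : Fin k, (Vs i).map (T : V →ₗ[F] V) = Vs i :=
  stmt10_general hp Vs hind u ξ hξu T hT hperm
end

section
/- Let V be a finite-dimensional vector space over F_q with q odd, H ≤ GL(V) a subgroup preserving a nondegenerate Hermitian form h (relative to F_{q^2}/F_q structure or unitary setting), generated by unitary transvections. If W ⊆ V is an H-invariant subspace and u is an isotropic vector such that all unitary transvections with direction u lie in H, then u ∈ W or u ∈ W^⊥. -/
/-!
For `star c = -c`, `c ≠ 0`, the map `x ↦ x + c·h(x,u)·u` is a unitary transvection, hence lies
in `H`, so it maps every `w ∈ W` into `W`; the difference `c·h(w,u)·u` then lies in `W`. Unless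
`u ⟂ W`, some `w` makes this scalar nonzero, and `u ∈ W`.
-/

open Module

theorem Submodule.mem_of_transvection_apply_mem {K V : Type*} [DivisionRing K] [AddCommGroup V]
    [Module K V] {W : Submodule K V} {f : Dual K V} {v w : V} (hw : w ∈ W)
    (hTw : LinearMap.transvection f v w ∈ W) (hfw : f w ≠ 0) : v ∈ W := by
  have hsmul : f w • v ∈ W := by
    simpa [LinearMap.transvection.apply] using W.sub_mem hTw hw
  exact (W.smul_mem_iff hfw).mp hsmul

section Hermitian

variable {R V : Type*} [CommRing R] [StarRing R] [AddCommGroup V] [Module R V]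
  {h : V →ₗ[R] V →ₛₗ[starRingEnd R] R}

theorem transvection_smul_flip_apply (u : V) (c : R) (x : V) :
    LinearMap.transvection (c • h.flip u) u x = x + (c * h x u) • u :=
  rfl

/-- The cross terms `c h(x,u) h(u,y)` and `star c · h(x,u) h(u,y)` cancel since `c` is purely
imaginary, and the quadratic term vanishes since `u` is isotropic. -/
theorem transvection_smul_flip_isometry (hherm : ∀ x y : V, h x y = star (h y x)) {u : V}
    (hu : h u u = 0) {c : R} (hc : star c = -c) (x y : V) :
    h (LinearMap.transvection (c • h.flip u) u x) (LinearMap.transvection (c • h.flip u) u y) =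
      h x y := by
  simp only [transvection_smul_flip_apply, map_add, map_smul, map_smulₛₗ, LinearMap.add_apply,
    LinearMap.smul_apply, smul_eq_mul, starRingEnd_apply, star_mul, hu, hc, hherm u y]
  ring

end Hermitian

theorem stmt11_general {E V : Type*} [Field E] [StarRing E] [AddCommGroup V] [Module E V]
    (himag : ∃ c : E, c ≠ 0 ∧ star c = -c)
    (h : V →ₗ[E] V →ₛₗ[starRingEnd E] E)
    (hherm : ∀ x y : V, h x y = star (h y x))
    (H : Subgroup (V ≃ₗ[E] V))
    (W : Submodule E V) (hWinv : ∀ g ∈ H, ∀ x ∈ W, g x ∈ W)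
    (u : V) (hu : h u u = 0)
    (htrans : ∀ (T : V ≃ₗ[E] V) (c : E),
      (∀ x : V, T x = x + (c * h x u) • u) → (∀ x y : V, h (T x) (T y) = h x y) → T ∈ H) :
    u ∈ W ∨ ∀ w ∈ W, h u w = 0 := by
  obtain ⟨c, hc0, hc⟩ := himag
  refine or_iff_not_imp_right.mpr fun hperp => ?_
  obtain ⟨w, hwW, hw⟩ := not_forall₂.mp hperp
  have hfu : (c • h.flip u) u = 0 := by simp [hu]
  have hTH : LinearEquiv.transvection hfu ∈ H :=
    htrans _ c (transvection_smul_flip_apply u c) (transvection_smul_flip_isometry hherm hu hc)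
  refine W.mem_of_transvection_apply_mem hwW (hWinv _ hTH w hwW) ?_
  simpa [hherm w u, hc0] using hw

/-- Let `V` be a finite-dimensional vector space carrying a nondegenerate
Hermitian form `h` (relative to a quadratic extension with involution, in the unitary setting
with odd characteristic, encoded by the existence of a nonzero purely imaginary scalar), and let
`H ≤ GL(V)` be a subgroup preserving `h` and generated by unitary transvections
(maps `x ↦ x + c·h(x,u)·u` with `u` isotropic, preserving `h`).  If `W ⊆ V` is an `H`-invariant
subspace and `u` is an isotropic vector such that all unitary transvections with direction `u`
lie in `H`, then `u ∈ W` or `u ∈ W^⊥`. -/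
theorem stmt11 {E V : Type*} [Field E] [StarRing E] [AddCommGroup V] [Module E V]
    [FiniteDimensional E V]
    (himag : ∃ c : E, c ≠ 0 ∧ star c = -c)
    (h : V →ₗ[E] V →ₛₗ[starRingEnd E] E)
    (hherm : ∀ x y : V, h x y = star (h y x))
    (hnd : ∀ x : V, (∀ y : V, h x y = 0) → x = 0)
    (H : Subgroup (V ≃ₗ[E] V))
    (hHisom : ∀ g ∈ H, ∀ x y : V, h (g x) (g y) = h x y)
    (hgen : ∃ S : Set (V ≃ₗ[E] V),
      (∀ T ∈ S, ∃ (w : V) (c : E), h w w = 0 ∧ ∀ x : V, T x = x + (c * h x w) • w) ∧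
      H = Subgroup.closure S)
    (W : Submodule E V) (hWinv : ∀ g ∈ H, ∀ x ∈ W, g x ∈ W)
    (u : V) (hu : h u u = 0)
    (htrans : ∀ (T : V ≃ₗ[E] V) (c : E),
      (∀ x : V, T x = x + (c * h x u) • u) → (∀ x y : V, h (T x) (T y) = h x y) → T ∈ H) :
    u ∈ W ∨ ∀ w ∈ W, h u w = 0 :=
  stmt11_general himag h hherm H W hWinv u hu htrans
end
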